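/- Let $\Phi$ denote the standard normal distribution function. Then $\max_{0 \le x \le n} \Big| \frac{1-\Phi(x)}{1-\Phi(x - n^{-2})} - 1 \Big| = O(n^{-1})$ as $n \to \infty$. -/

import Mathlib

/-!
Write `Q = 1 - Φ` and `φ` for the standard normal density. For `0 ≤ x` and `ε = n⁻²` the ratio
`Q x / Q (x - ε)` differs from `1` by `(Φ x - Φ (x - ε)) / Q (x - ε) ≤ (Φ x - Φ (x - ε)) / Q x`.
On `[x - ε, x]` the density is at most `e φ(x)` because `ε x ≤ 1`, so the numerator is at most
`e ε φ(x)`; on `[x, x + 1/(x+1)]` it is at least `e⁻² φ(x)`, a Mills-ratio type bound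
`Q x ≥ e⁻² φ(x) / (x + 1)`. Hence the ratio is within `e³ ε (x + 1) ≤ 2e³ / n` of `1`.
-/

open MeasureTheory ProbabilityTheory

/-- The standard normal cumulative distribution function. -/
noncomputable def stdNormalCDF (x : ℝ) : ℝ :=
  ((gaussianReal 0 1) (Set.Iic x)).toReal

open Real Set

lemma gaussianPDFReal_le_exp_mul {s t c : ℝ} (h : t ^ 2 - s ^ 2 ≤ 2 * c) :
    gaussianPDFReal 0 1 s ≤ exp c * gaussianPDFReal 0 1 t := by
  simp only [gaussianPDFReal, sub_zero, NNReal.coe_one, mul_one]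
  rw [mul_left_comm, ← exp_add]
  gcongr
  linarith

lemma stdNormalCDF_sub_stdNormalCDF_eq_integral {a b : ℝ} (hab : a ≤ b) :
    stdNormalCDF b - stdNormalCDF a = ∫ t in a..b, gaussianPDFReal 0 1 t := by
  have hIoc : (gaussianReal 0 1).real (Ioc a b) = stdNormalCDF b - stdNormalCDF a := by
    have h := measureReal_union (μ := gaussianReal 0 1) (Iic_disjoint_Ioc (c := b) le_rfl)
      measurableSet_Ioc
    rw [Iic_union_Ioc_eq_Iic hab] at h
    simp only [stdNormalCDF, ← measureReal_def, h, add_sub_cancel_left]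
  rw [← hIoc, measureReal_def, gaussianReal_apply_eq_integral 0 one_ne_zero,
    ENNReal.toReal_ofReal (setIntegral_nonneg measurableSet_Ioc fun t _ ↦
      gaussianPDFReal_nonneg 0 1 t), intervalIntegral.integral_of_le hab]

lemma stdNormalCDF_le_one (x : ℝ) : stdNormalCDF x ≤ 1 := measureReal_le_one

lemma stdNormalCDF_mono : Monotone stdNormalCDF := fun _ _ h ↦
  measureReal_mono (Iic_subset_Iic.2 h)

lemma stdNormalCDF_sub_stdNormalCDF_le {a b M : ℝ} (hab : a ≤ b)
    (hM : ∀ t ∈ Icc a b, gaussianPDFReal 0 1 t ≤ M) :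
    stdNormalCDF b - stdNormalCDF a ≤ (b - a) * M := by
  rw [stdNormalCDF_sub_stdNormalCDF_eq_integral hab, ← smul_eq_mul,
    ← intervalIntegral.integral_const]
  exact intervalIntegral.integral_mono_on hab
    (integrable_gaussianPDFReal 0 1).intervalIntegrable intervalIntegrable_const hM

lemma le_stdNormalCDF_sub_stdNormalCDF {a b m : ℝ} (hab : a ≤ b)
    (hm : ∀ t ∈ Icc a b, m ≤ gaussianPDFReal 0 1 t) :
    (b - a) * m ≤ stdNormalCDF b - stdNormalCDF a := by
  rw [stdNormalCDF_sub_stdNormalCDF_eq_integral hab, ← smul_eq_mul,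
    ← intervalIntegral.integral_const]
  exact intervalIntegral.integral_mono_on hab
    intervalIntegrable_const (integrable_gaussianPDFReal 0 1).intervalIntegrable hm

lemma stdNormalCDF_sub_stdNormalCDF_sub_le {x ε : ℝ} (hε : 0 ≤ ε) (hεx : ε * x ≤ 1) :
    stdNormalCDF x - stdNormalCDF (x - ε) ≤ ε * (exp 1 * gaussianPDFReal 0 1 x) := by
  have h := stdNormalCDF_sub_stdNormalCDF_le (a := x - ε) (b := x)
    (M := exp 1 * gaussianPDFReal 0 1 x) (by linarith) fun t ht ↦ by
    refine gaussianPDFReal_le_exp_mul ?_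
    obtain ⟨hlo, hhi⟩ := ht
    rcases le_total 0 t with ht0 | ht0
    · nlinarith
    · rcases le_total 0 x with hx0 | hx0 <;> nlinarith
  rwa [sub_sub_cancel] at h

lemma exp_neg_two_mul_gaussianPDFReal_le {x : ℝ} (hx : 0 ≤ x) :
    exp (-2) * gaussianPDFReal 0 1 x ≤ (x + 1) * (1 - stdNormalCDF x) := by
  set δ := (x + 1)⁻¹
  have hδ : 0 < δ := by positivity
  have hxδ : (x + 1) * δ = 1 := mul_inv_cancel₀ (by positivity)
  have h := le_stdNormalCDF_sub_stdNormalCDF (a := x) (b := x + δ)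
    (m := exp (-2) * gaussianPDFReal 0 1 x) (by linarith) fun t ht ↦ by
      rw [exp_neg, inv_mul_le_iff₀ (exp_pos 2)]
      refine gaussianPDFReal_le_exp_mul ?_
      obtain ⟨hlo, hhi⟩ := ht
      have hδ1 : δ ≤ 1 := by nlinarith
      nlinarith [mul_le_mul (sub_le_iff_le_add'.2 hhi) (by linarith : t + x ≤ 2 * x + δ)
        (by linarith) hδ.le]
  rw [add_sub_cancel_left] at h
  calc exp (-2) * gaussianPDFReal 0 1 x
      = (x + 1) * (δ * (exp (-2) * gaussianPDFReal 0 1 x)) := by rw [← mul_assoc, hxδ, one_mul]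
    _ ≤ (x + 1) * (1 - stdNormalCDF x) := by
      gcongr
      linarith [stdNormalCDF_le_one (x + δ)]

lemma abs_div_one_sub_stdNormalCDF_sub_one_le {x ε : ℝ} (hx : 0 ≤ x) (hε : 0 ≤ ε)
    (hεx : ε * x ≤ 1) :
    |(1 - stdNormalCDF x) / (1 - stdNormalCDF (x - ε)) - 1| ≤ exp 3 * ε * (x + 1) := by
  set D := stdNormalCDF x - stdNormalCDF (x - ε)
  set Q := 1 - stdNormalCDF x
  have hD : 0 ≤ D := sub_nonneg.2 (stdNormalCDF_mono (by linarith))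
  have hφ := gaussianPDFReal_pos 0 1 x one_ne_zero
  have hmills := exp_neg_two_mul_gaussianPDFReal_le hx
  have hQ : 0 < Q := pos_of_mul_pos_right ((mul_pos (exp_pos _) hφ).trans_le hmills) (by linarith)
  have hD_le : D ≤ exp 3 * ε * (x + 1) * Q := by
    calc D ≤ ε * (exp 1 * gaussianPDFReal 0 1 x) := stdNormalCDF_sub_stdNormalCDF_sub_le hε hεx
      _ = exp 3 * ε * (exp (-2) * gaussianPDFReal 0 1 x) := by
        rw [show (3 : ℝ) = 1 + 2 by norm_num, exp_add, show exp (-2) = (exp 2)⁻¹ from exp_neg 2]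
        field_simp
      _ ≤ exp 3 * ε * (x + 1) * Q := by
        rw [mul_assoc _ (x + 1)]
        gcongr
  have hsplit : 1 - stdNormalCDF (x - ε) = Q + D := by ring
  have hQD : 0 < Q + D := by linarith
  rw [hsplit, div_sub_one hQD.ne', show Q - (Q + D) = -D by ring, abs_div, abs_neg,
    abs_of_nonneg hD, abs_of_pos hQD, div_le_iff₀ hQD]
  nlinarith [mul_nonneg (by positivity : 0 ≤ exp 3 * ε * (x + 1)) hD]

/-- Stability of Gaussian tails under perturbation `-n⁻²`:
`max_{0 ≤ x ≤ n} |(1-Φ(x))/(1-Φ(x-n⁻²)) - 1| = O(n⁻¹)`. -/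
theorem gaussian_tail_stability_minus :
    ∃ (C : ℝ) (N : ℕ), ∀ n : ℕ, N ≤ n → ∀ x : ℝ, 0 ≤ x → x ≤ n →
      |(1 - stdNormalCDF x) / (1 - stdNormalCDF (x - ((n : ℝ) ^ 2)⁻¹)) - 1| ≤ C / n := by
  refine ⟨2 * exp 3, 1, fun n hn x hx hxn ↦ ?_⟩
  have hn : (1 : ℝ) ≤ n := by exact_mod_cast hn
  have hεx : ((n : ℝ) ^ 2)⁻¹ * x ≤ 1 := by
    rw [inv_mul_le_iff₀ (by positivity)]
    nlinarith
  have hεx1 : ((n : ℝ) ^ 2)⁻¹ * (x + 1) ≤ 2 / n := by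
    rw [inv_mul_le_iff₀ (by positivity), mul_div_assoc', le_div_iff₀ (by positivity)]
    nlinarith
  calc _ ≤ exp 3 * ((n : ℝ) ^ 2)⁻¹ * (x + 1) :=
        abs_div_one_sub_stdNormalCDF_sub_one_le hx (by positivity) hεx
    _ ≤ 2 * exp 3 / n := by
      rw [mul_assoc, mul_comm 2, mul_div_assoc]
      gcongr
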